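/- arXiv:2510.06851 — 3 statements merged into one kernel-verified Lean document; each statement's English description precedes it below -/
import Mathlib

section
/- For every Φ ∈ ℝ^m and every 2N×2N complex matrix ρ, averaging over two independent index tuples yields Σ_{κ, κ' ∈ {1,…,L}^m} (∏_{j=1}^m λ_{κ_j}) · (∏_{j=1}^m λ_{κ'_j}) · U_Φ^{(κ)} · ρ · (U_Φ^{(κ')})† = U_Φ · ρ · U_Φ†. -/
open Matrix

/-- For an N×N matrix `A`, the 2N×2N block matrix `[[c·I, s·A],[s·A†, −c·I]]`. -/
noncomputable def embedMat (N : ℕ) (c s : ℝ) (A : Matrix (Fin N) (Fin N) ℂ) :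
    Matrix (Fin N ⊕ Fin N) (Fin N ⊕ Fin N) ℂ :=
  Matrix.fromBlocks ((c : ℂ) • 1) ((s : ℂ) • A) ((s : ℂ) • Aᴴ) (-((c : ℂ) • 1))

/-- The unitary `e^{iφ(2Π̃−I)} = [[e^{iφ}·I, 0],[0, e^{−iφ}·I]]`. -/
noncomputable def phasePlus (N : ℕ) (φ : ℝ) : Matrix (Fin N ⊕ Fin N) (Fin N ⊕ Fin N) ℂ :=
  Matrix.fromBlocks (Complex.exp (Complex.I * φ) • 1) 0 0 (Complex.exp (-(Complex.I * φ)) • 1)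

/-- The unitary `e^{iφ(2Π−I)} = [[e^{−iφ}·I, 0],[0, e^{iφ}·I]]`. -/
noncomputable def phaseMinus (N : ℕ) (φ : ℝ) : Matrix (Fin N ⊕ Fin N) (Fin N ⊕ Fin N) ℂ :=
  Matrix.fromBlocks (Complex.exp (-(Complex.I * φ)) • 1) 0 0 (Complex.exp (Complex.I * φ) • 1)

/-- The alternating phase sequence built from matrices `V 0, …, V (m−1)` (1-indexed as
`V_1, …, V_m`): for even `m` it is
`∏_{j=1}^{m/2} (e^{iφ_{2j−1}(2Π−I)}·V_{2j−1}ᴴ·e^{iφ_{2j}(2Π̃−I)}·V_{2j})` and for odd `m` it is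
`e^{iφ_1(2Π̃−I)}·V_1·∏_{j=1}^{(m−1)/2} (e^{iφ_{2j}(2Π−I)}·V_{2j}ᴴ·e^{iφ_{2j+1}(2Π̃−I)}·V_{2j+1})`;
equivalently, the position-`p` factor (for `p = 1,…,m`) is `e^{iφ_p(2Π̃−I)}·V_p` when `m − p`
is even and `e^{iφ_p(2Π−I)}·V_pᴴ` when `m − p` is odd, multiplied left to right. -/
noncomputable def phaseSeq (N m : ℕ) (φ : Fin m → ℝ)
    (V : Fin m → Matrix (Fin N ⊕ Fin N) (Fin N ⊕ Fin N) ℂ) :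
    Matrix (Fin N ⊕ Fin N) (Fin N ⊕ Fin N) ℂ :=
  ((List.finRange m).map fun j =>
      if (m - (j.val + 1)) % 2 = 0 then phasePlus N (φ j) * V j
      else phaseMinus N (φ j) * (V j)ᴴ).prod

/-!
`phaseSeq` is a product of factors each of which is `ℝ`-linear in its own matrix slot (the
adjoint slots are only conjugate-linear, but the weights are real). Averaging the slots
independently therefore commutes with the product, by expanding a (noncommutative) product of
sums. `embedMat` is affine and the weights sum to one, so the averaged factor is the one built
from the averaged `H`. Finally the double average over `κ, κ'` factors as `Ū ρ Ū†`.
-/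

theorem List.prod_ofFn_sum_smul {R A ι : Type*} [CommSemiring R] [Semiring A] [Algebra R A]
    [Fintype ι] {m : ℕ} (w : ι → R) (f : Fin m → ι → A) :
    (List.ofFn fun j => ∑ k, w k • f j k).prod
      = ∑ κ : Fin m → ι, (∏ j, w (κ j)) • (List.ofFn fun j => f j (κ j)).prod := by
  simpa only [MultilinearMap.mkPiAlgebraFin_apply, MultilinearMap.map_smul_univ] using
    (MultilinearMap.mkPiAlgebraFin R m A).map_sum fun j k => w k • f j k

theorem sum_smul_mul_mul_star_sum {R A ι : Type*} [CommSemiring R] [StarRing R] [TrivialStar R]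
    [Semiring A] [StarRing A] [Algebra R A] [StarModule R A] [Fintype ι]
    (a : ι → R) (x : ι → A) (y : A) :
    (∑ i, a i • x i) * y * star (∑ j, a j • x j)
      = ∑ i, ∑ j, (a i * a j) • (x i * y * star (x j)) := by
  simp only [star_sum, star_smul, star_trivial, Finset.sum_mul, Finset.mul_sum,
    smul_mul_assoc, mul_smul_comm, Finset.smul_sum, smul_smul]
  rw [Finset.sum_comm]
  simp only [mul_comm]

theorem embedMat_sum_smul {ι : Type*} {n : ℕ} [Fintype ι] (c s : ℝ) (w : ι → ℝ)
    (hw : ∑ k, w k = 1) (H : ι → Matrix (Fin n) (Fin n) ℂ) :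
    ∑ k, w k • embedMat n c s (H k) = embedMat n c s (∑ k, w k • H k) := by
  ext (i | i) (j | j) <;>
    simp only [embedMat, Matrix.sum_apply, Matrix.smul_apply, fromBlocks_apply₁₁,
      fromBlocks_apply₁₂, fromBlocks_apply₂₁, fromBlocks_apply₂₂, Matrix.neg_apply,
      conjTranspose_sum, conjTranspose_smul, star_trivial, ← Finset.sum_smul, hw, one_smul,
      Finset.smul_sum, smul_neg, Finset.sum_neg_distrib, smul_comm (s : ℂ) (w _)]

noncomputable def phaseFactor (N m : ℕ) (φ : Fin m → ℝ) (j : Fin m)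
    (A : Matrix (Fin N ⊕ Fin N) (Fin N ⊕ Fin N) ℂ) : Matrix (Fin N ⊕ Fin N) (Fin N ⊕ Fin N) ℂ :=
  if (m - (j.val + 1)) % 2 = 0 then phasePlus N (φ j) * A else phaseMinus N (φ j) * Aᴴ

theorem phaseSeq_eq_prod_ofFn (N m : ℕ) (φ : Fin m → ℝ)
    (V : Fin m → Matrix (Fin N ⊕ Fin N) (Fin N ⊕ Fin N) ℂ) :
    phaseSeq N m φ V = (List.ofFn fun j => phaseFactor N m φ j (V j)).prod := by
  rw [List.ofFn_eq_map]
  rfl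

theorem phaseFactor_sum_smul {ι : Type*} [Fintype ι] (N m : ℕ) (φ : Fin m → ℝ) (j : Fin m)
    (w : ι → ℝ) (A : ι → Matrix (Fin N ⊕ Fin N) (Fin N ⊕ Fin N) ℂ) :
    phaseFactor N m φ j (∑ k, w k • A k) = ∑ k, w k • phaseFactor N m φ j (A k) := by
  unfold phaseFactor
  split_ifs <;>
    simp only [conjTranspose_sum, conjTranspose_smul, star_trivial, Matrix.mul_sum, mul_smul_comm]

theorem sum_smul_phaseSeq {ι : Type*} [Fintype ι] (N m : ℕ) (φ : Fin m → ℝ) (w : ι → ℝ)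
    (A : ι → Matrix (Fin N ⊕ Fin N) (Fin N ⊕ Fin N) ℂ) :
    ∑ κ : Fin m → ι, (∏ j, w (κ j)) • phaseSeq N m φ (fun j => A (κ j))
      = phaseSeq N m φ (fun _ => ∑ k, w k • A k) := by
  simp only [phaseSeq_eq_prod_ofFn, phaseFactor_sum_smul, List.prod_ofFn_sum_smul]

theorem stmt3_general (N L m : ℕ)
    (Hk : Fin L → Matrix (Fin N) (Fin N) ℂ)
    (lam : Fin L → ℝ) (hsum : ∑ k, lam k = 1)
    (c s : ℝ) (φ : Fin m → ℝ)
    (ρ : Matrix (Fin N ⊕ Fin N) (Fin N ⊕ Fin N) ℂ) :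
    ∑ κ : Fin m → Fin L, ∑ κ' : Fin m → Fin L,
        ((((∏ j, lam (κ j)) * (∏ j, lam (κ' j))) : ℝ) : ℂ) •
          (phaseSeq N m φ (fun j => embedMat N c s (Hk (κ j))) * ρ *
            (phaseSeq N m φ (fun j => embedMat N c s (Hk (κ' j))))ᴴ)
      = phaseSeq N m φ (fun _ => embedMat N c s (∑ k, ((lam k : ℝ) : ℂ) • Hk k)) * ρ *
          (phaseSeq N m φ (fun _ => embedMat N c s (∑ k, ((lam k : ℝ) : ℂ) • Hk k)))ᴴ := by
  simp only [Complex.coe_smul, ← star_eq_conjTranspose]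
  rw [← embedMat_sum_smul c s lam hsum, ← sum_smul_phaseSeq, sum_smul_mul_mul_star_sum]

/-- in the setting of the randomized alternating phase sequences, for every
`Φ ∈ ℝ^m` and every 2N×2N complex matrix `ρ`, averaging over two independent index tuples
yields `Σ_{κ,κ'} (∏_j λ_{κ_j})·(∏_j λ_{κ'_j})·U_Φ^{(κ)}·ρ·(U_Φ^{(κ')})† = U_Φ·ρ·U_Φ†`. -/
theorem stmt3 (N L m : ℕ) (hN : 1 ≤ N) (hL : 1 ≤ L) (hm : 1 ≤ m)
    (Hk : Fin L → Matrix (Fin N) (Fin N) ℂ)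
    (hunit : ∀ k, Hk k ∈ Matrix.unitaryGroup (Fin N) ℂ)
    (lam : Fin L → ℝ) (hlam : ∀ k, 0 ≤ lam k) (hsum : ∑ k, lam k = 1)
    (c s : ℝ) (φ : Fin m → ℝ)
    (ρ : Matrix (Fin N ⊕ Fin N) (Fin N ⊕ Fin N) ℂ) :
    ∑ κ : Fin m → Fin L, ∑ κ' : Fin m → Fin L,
        ((((∏ j, lam (κ j)) * (∏ j, lam (κ' j))) : ℝ) : ℂ) •
          (phaseSeq N m φ (fun j => embedMat N c s (Hk (κ j))) * ρ *
            (phaseSeq N m φ (fun j => embedMat N c s (Hk (κ' j))))ᴴ)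
      = phaseSeq N m φ (fun _ => embedMat N c s (∑ k, ((lam k : ℝ) : ℂ) • Hk k)) * ρ *
          (phaseSeq N m φ (fun _ => embedMat N c s (∑ k, ((lam k : ℝ) : ℂ) • Hk k)))ᴴ :=
  stmt3_general N L m Hk lam hsum c s φ ρ
end

section
/- For every integer k ≥ 1 and every real z ∈ [−1,1], |S_k(z)| ≤ Σ_{m=0}^{k−1} c_m ≤ 1 + 2·√(k/π). -/
/-!
Bounding each `|z|^(2m+1)` by `1` gives the first inequality. For the second, Wallis' lower
bound `(2n+1)/(2n+2) · π/2 ≤ W n`, with `W n = 1/(c_n² (2n+1))`, yields `c_n ≤ 1/√(πn)`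
for `n ≥ 1`. Together with `c_0 = 1` and `1/√(m+1) ≤ 2(√(m+1) − √m)`, the sum telescopes
to at most `1 + 2√((k−1)/π)`.
-/

open Finset Real

/-- The Taylor coefficient `c_m = (2m)!/(4^m·(m!)²)` of `z/√(1−z²) = Σ_m c_m·z^{2m+1}`. -/
noncomputable def cm (m : ℕ) : ℝ :=
  (Nat.factorial (2 * m) : ℝ) / (4 ^ m * (Nat.factorial m : ℝ) ^ 2)

/-- The order-`k` truncation `S_k(z) = Σ_{m=0}^{k−1} c_m·z^{2m+1}` of the series of `z/√(1−z²)`. -/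
noncomputable def Sk (k : ℕ) (z : ℝ) : ℝ := ∑ m ∈ Finset.range k, cm m * z ^ (2 * m + 1)

lemma cm_pos (m : ℕ) : 0 < cm m := by
  unfold cm
  positivity

lemma cm_zero : cm 0 = 1 := by
  simp [cm]

lemma abs_Sk_le (k : ℕ) {z : ℝ} (hz : |z| ≤ 1) : |Sk k z| ≤ ∑ m ∈ range k, cm m := by
  refine (abs_sum_le_sum_abs _ _).trans (sum_le_sum fun m _ => ?_)
  rw [abs_mul, abs_pow, abs_of_pos (cm_pos m)]
  exact mul_le_of_le_one_right (cm_pos m).le (pow_le_one₀ (abs_nonneg z) hz)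

lemma Real.Wallis.W_eq_inv_cm_sq (n : ℕ) : Wallis.W n = (cm n ^ 2 * (2 * n + 1))⁻¹ := by
  rw [Wallis.W_eq_factorial_ratio, cm, show (4 : ℝ) ^ n = 2 ^ (2 * n) by rw [pow_mul]; norm_num]
  field_simp
  ring

lemma cm_sq_mul_pi_mul_le_one (n : ℕ) : cm n ^ 2 * (π * n) ≤ 1 := by
  have hW := Wallis.le_W n
  rw [Wallis.W_eq_inv_cm_sq, div_mul_eq_mul_div, div_le_iff₀ (by positivity),
    le_inv_mul_iff₀ (by have := cm_pos n; positivity)] at hW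
  nlinarith [mul_nonneg pi_pos.le (sq_nonneg (cm n))]

lemma cm_le_inv_sqrt {n : ℕ} (hn : 0 < n) : cm n ≤ (√(π * n))⁻¹ := by
  have hpos : 0 < π * n := by positivity
  rw [← sqrt_inv, le_sqrt (cm_pos n).le (inv_nonneg.mpr hpos.le), ← one_div,
    le_div_iff₀ hpos]
  exact cm_sq_mul_pi_mul_le_one n

lemma inv_sqrt_add_one_le {x : ℝ} (hx : 0 ≤ x) : (√(x + 1))⁻¹ ≤ 2 * (√(x + 1) - √x) := by
  have ha : 0 < √(x + 1) := sqrt_pos.mpr (by linarith)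
  have hab : √x ≤ √(x + 1) := sqrt_le_sqrt (by linarith)
  rw [inv_le_iff_one_le_mul₀' ha]
  -- `1 = √(x+1)² - √x²`, so the claim is `0 ≤ (√(x+1) - √x)²`
  nlinarith [sq_sqrt hx, sq_sqrt (by linarith : 0 ≤ x + 1)]

lemma sum_range_inv_sqrt_succ_le (n : ℕ) : ∑ m ∈ range n, (√(m + 1))⁻¹ ≤ 2 * √n := by
  calc ∑ m ∈ range n, (√(m + 1))⁻¹
      ≤ ∑ m ∈ range n, 2 * (√((m + 1 : ℕ) : ℝ) - √(m : ℝ)) :=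
        sum_le_sum fun m _ => by exact_mod_cast inv_sqrt_add_one_le m.cast_nonneg
    _ = 2 * √n := by
        rw [← mul_sum, sum_range_sub (fun m : ℕ => √(m : ℝ))]
        simp

lemma sum_range_cm_le (k : ℕ) : ∑ m ∈ range k, cm m ≤ 1 + 2 * √(k / π) := by
  cases k with
  | zero => simp
  | succ j =>
    rw [sum_range_succ', cm_zero, add_comm]
    gcongr
    calc ∑ m ∈ range j, cm (m + 1)
        ≤ ∑ m ∈ range j, (√π)⁻¹ * (√(m + 1))⁻¹ := sum_le_sum fun m _ => by
          rw [← mul_inv, ← sqrt_mul pi_pos.le]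
          exact_mod_cast cm_le_inv_sqrt m.succ_pos
      _ ≤ (√π)⁻¹ * (2 * √j) := by
          rw [← mul_sum]
          gcongr
          exact sum_range_inv_sqrt_succ_le j
      _ ≤ 2 * √((j + 1 : ℕ) / π) := by
          rw [sqrt_div' _ pi_pos.le, inv_mul_eq_div, mul_div_assoc]
          gcongr
          simp

theorem stmt12_general (k : ℕ) (z : ℝ) (hz : z ∈ Set.Icc (-1:ℝ) 1) :
    |Sk k z| ≤ ∑ m ∈ Finset.range k, cm m ∧
    ∑ m ∈ Finset.range k, cm m ≤ 1 + 2 * Real.sqrt ((k : ℝ) / Real.pi) :=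
  ⟨abs_Sk_le k (abs_le.mpr hz), sum_range_cm_le k⟩

/-- for every integer `k ≥ 1` and every real `z ∈ [−1,1]`,
`|S_k(z)| ≤ Σ_{m=0}^{k−1} c_m ≤ 1 + 2·√(k/π)`. -/
theorem stmt12 (k : ℕ) (hk : 1 ≤ k) (z : ℝ) (hz : z ∈ Set.Icc (-1:ℝ) 1) :
    |Sk k z| ≤ ∑ m ∈ Finset.range k, cm m ∧
    ∑ m ∈ Finset.range k, cm m ≤ 1 + 2 * Real.sqrt ((k : ℝ) / Real.pi) :=
  stmt12_general k z hz
end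

section
/- For every integer n ≥ 3, α_comm^{(2k+1)} ≥ 2^{2k} · min{h^{k+1}·J^k, h^k·J^{k+1}} · n. -/
/-- The spectral (ℓ²-operator) norm of a complex matrix. -/
noncomputable def specNorm {m n : Type*} [Fintype m] [Fintype n] [DecidableEq n]
    (A : Matrix m n ℂ) : ℝ :=
  ‖LinearMap.toContinuousLinearMap (Matrix.toEuclideanLin A)‖

/-- The Pauli `Z` operator acting on the `i`-th factor of the `n`-qubit space
`(ℂ²)^{⊗n} ≅ ℂ^{2^n}` (identified with `ℂ^{Fin n → Fin 2}`), identity elsewhere. -/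
def qubitZ (n : ℕ) (i : Fin n) : Matrix (Fin n → Fin 2) (Fin n → Fin 2) ℂ :=
  Matrix.diagonal fun x => if x i = 0 then 1 else -1

/-- The Pauli `X` operator acting on the `i`-th factor of the `n`-qubit space, identity
elsewhere: it flips the `i`-th bit. -/
def qubitX (n : ℕ) (i : Fin n) : Matrix (Fin n → Fin 2) (Fin n → Fin 2) ℂ :=
  Matrix.of fun x y => if y = Function.update x i (x i + 1) then 1 else 0
/-- The cyclic successor of a site: site `n+1` means site `1`. -/
def nextSite {n : ℕ} (i : Fin n) : Fin n :=
  ⟨(i.val + 1) % n, Nat.mod_lt _ (Nat.lt_of_le_of_lt (Nat.zero_le _) i.isLt)⟩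

/-- Index set for the family `S`: the terms `h·Z_i`, the terms `J·X_i·X_{i+1}`, and the
terms `(g/n)·|i−j|^{−α}·Z_i·Z_j` for `i < j` (counted with multiplicity). -/
abbrev SIdx (n : ℕ) := Fin n ⊕ Fin n ⊕ {p : Fin n × Fin n // p.1 < p.2}

/-- The member of the family `S` with the given index. -/
noncomputable def SOp (n : ℕ) (h J g α : ℝ) :
    SIdx n → Matrix (Fin n → Fin 2) (Fin n → Fin 2) ℂ
  | Sum.inl i => (h : ℂ) • qubitZ n i
  | Sum.inr (Sum.inl i) => (J : ℂ) • (qubitX n i * qubitX n (nextSite i))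
  | Sum.inr (Sum.inr p) =>
      ((g / n * |((p.val.1 : ℕ) : ℝ) - ((p.val.2 : ℕ) : ℝ)| ^ (-α) : ℝ) : ℂ) •
        (qubitZ n p.val.1 * qubitZ n p.val.2)

/-- The nested commutator `[A_1,[A_2,[…,[A_r, B]…]]]` of a list `[A_1,…,A_r]` applied to `B`. -/
noncomputable def nestedComm {ι : Type*} [Fintype ι] [DecidableEq ι]
    (l : List (Matrix ι ι ℂ)) (B : Matrix ι ι ℂ) : Matrix ι ι ℂ :=
  l.foldr (fun A acc => A * acc - acc * A) B

/-- `α_comm^{(2k+1)} = Σ` over all ordered `(2k+1)`-tuples `(S_1,…,S_{2k+1})` of members of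
the family `S` of the spectral norm of `[S_1,[S_2,[…,[S_{2k}, S_{2k+1}]…]]]`. -/
noncomputable def alphaComm (n : ℕ) (h J g α : ℝ) (k : ℕ) : ℝ :=
  ∑ f : Fin (2 * k + 1) → SIdx n,
    specNorm (nestedComm
      ((List.finRange (2 * k)).map fun j => SOp n h J g α (f j.castSucc))
      (SOp n h J g α (f (Fin.last (2 * k)))))

/-!
Every member of `S` other than the long-range terms is a scalar multiple of a Pauli string:
these square to `1` and pairwise either commute or anticommute. If `A` anticommutes with `M`
then `[A, M] = 2 A M`, and `A M` again anticommutes with `A`; so a nested commutator along a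
chain of anticommuting steps is `2^r` times a product of Pauli strings, which is unitary and has
norm `1`. For each site `i` we build such a chain from `k` copies of `J X_i X_{i+1}` and `k`
copies of `h Z_{i+1}`, ending in `h Z_i`; its norm is `2^{2k} |h|^{k+1} |J|^k`. The parity of
`k` dictates the order of the blocks: `Z_{i+1}` anticommutes with `(X_i X_{i+1})^r Z_i` only for
odd `r`. The `n` tuples obtained this way have distinct last entries, and all other terms of
`α_comm` are nonnegative.
-/

open Matrix

section Involution

variable {M : Type*} [Monoid M] {a : M}

lemma pow_eq_one_of_mul_self_eq_one (ha : a * a = 1) {k : ℕ} (hk : Even k) : a ^ k = 1 := by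
  obtain ⟨t, rfl⟩ := hk
  rw [← two_mul, pow_mul, sq, ha, one_pow]

lemma pow_eq_self_of_mul_self_eq_one (ha : a * a = 1) {k : ℕ} (hk : Odd k) : a ^ k = a := by
  obtain ⟨t, rfl⟩ := hk
  rw [pow_succ, pow_mul, sq, ha, one_pow, one_mul]

end Involution

lemma mul_anticomm_of_anticomm_of_commute {R : Type*} [Ring R] {B Z Z' : R}
    (hBZ' : B * Z' = -(Z' * B)) (hZZ' : Commute Z Z') : Z' * (B * Z) = -(B * Z * Z') := by
  rw [← mul_assoc, ← neg_eq_iff_eq_neg.mpr hBZ', neg_mul, mul_assoc, mul_assoc, hZZ'.eq]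

section MatrixFacts

variable {ι : Type*} [Fintype ι] [DecidableEq ι]

lemma toMatrix_toPEquiv_mul_diagonal (σ : Equiv.Perm ι) (d : ι → ℂ) :
    σ.toPEquiv.toMatrix * diagonal d = diagonal (d ∘ σ) * σ.toPEquiv.toMatrix := by
  ext x y
  simp only [mul_diagonal, diagonal_mul, PEquiv.toMatrix_apply, Equiv.toPEquiv_apply,
    Option.mem_def, Option.some_inj, Function.comp_apply]
  split_ifs with h <;> simp [h]

lemma mem_unitary_of_isHermitian {A : Matrix ι ι ℂ} (hA : A.IsHermitian) (h : A * A = 1) :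
    A ∈ unitary (Matrix ι ι ℂ) := by
  rw [Unitary.mem_iff, star_eq_conjTranspose, hA.eq, and_self, h]

open scoped Matrix.Norms.L2Operator in
lemma specNorm_smul_of_mem_unitary [Nonempty ι] {U : Matrix ι ι ℂ}
    (hU : U ∈ unitary (Matrix ι ι ℂ)) (c : ℂ) : specNorm (c • U) = ‖c‖ := by
  change ‖c • U‖ = ‖c‖
  rw [norm_smul, CStarRing.norm_of_mem_unitary hU, mul_one]

end MatrixFacts

section NestedComm

variable {ι : Type*} [Fintype ι] [DecidableEq ι]

lemma nestedComm_append (l₁ l₂ : List (Matrix ι ι ℂ)) (B : Matrix ι ι ℂ) :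
    nestedComm (l₁ ++ l₂) B = nestedComm l₁ (nestedComm l₂ B) :=
  List.foldr_append ..

lemma nestedComm_smul (l : List (Matrix ι ι ℂ)) (c : ℂ) (B : Matrix ι ι ℂ) :
    nestedComm l (c • B) = c • nestedComm l B := by
  induction l with
  | nil => rfl
  | cons A l ih =>
    simp only [nestedComm, List.foldr_cons] at ih ⊢
    rw [ih, Matrix.mul_smul, Matrix.smul_mul, smul_sub]

lemma nestedComm_replicate_smul {A M : Matrix ι ι ℂ} (hAM : A * M = -(M * A)) (c : ℂ) (m : ℕ) :
    nestedComm (List.replicate m (c • A)) M = (2 * c) ^ m • (A ^ m * M) := by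
  induction m with
  | zero => simp [nestedComm]
  | succ m ih =>
    have hcomm : A ^ m * M * A = -(A ^ (m + 1) * M) := by
      rw [mul_assoc, ← neg_eq_iff_eq_neg.mpr hAM, mul_neg, ← mul_assoc, pow_succ]
    simp only [List.replicate_succ, nestedComm, List.foldr_cons] at ih ⊢
    rw [ih, Matrix.smul_mul, Matrix.mul_smul, Matrix.smul_mul, Matrix.mul_smul, ← mul_assoc,
      ← pow_succ', hcomm]
    simp only [smul_neg, smul_smul, sub_neg_eq_add, ← add_smul]
    congr 1
    ring

variable {B Z Z' : Matrix ι ι ℂ}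

lemma nestedComm_replicate_append_replicate (hB : B * B = 1) (hZ' : Z' * Z' = 1)
    (hBZ : B * Z = -(Z * B)) (hBZ' : B * Z' = -(Z' * B)) (hZZ' : Commute Z Z')
    {k : ℕ} (hk : Odd k) (a b : ℂ) :
    nestedComm (List.replicate k (a • Z') ++ List.replicate k (b • B)) (a • Z) =
      (2 ^ (2 * k) * (a ^ (k + 1) * b ^ k)) • (Z' * (B * Z)) := by
  rw [nestedComm_append, nestedComm_smul, nestedComm_replicate_smul hBZ,
    pow_eq_self_of_mul_self_eq_one hB hk, nestedComm_smul, nestedComm_smul,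
    nestedComm_replicate_smul (mul_anticomm_of_anticomm_of_commute hBZ' hZZ'),
    pow_eq_self_of_mul_self_eq_one hZ' hk, smul_smul, smul_smul]
  congr 1
  ring

lemma nestedComm_replicate_append_replicate_append_singleton (hB : B * B = 1)
    (hZ' : Z' * Z' = 1) (hBZ : B * Z = -(Z * B)) (hBZ' : B * Z' = -(Z' * B))
    (hZZ' : Commute Z Z') {m : ℕ} (hm : Odd m) (a b : ℂ) :
    nestedComm (List.replicate m (b • B) ++ List.replicate (m + 1) (a • Z') ++ [b • B]) (a • Z) =
      (2 ^ (2 * (m + 1)) * (a ^ (m + 1 + 1) * b ^ (m + 1))) • Z := by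
  have hBBZ : B * (B * Z) = -(B * Z * B) := by
    rw [← mul_assoc, hB, one_mul, mul_assoc, ← neg_eq_iff_eq_neg.mpr hBZ, mul_neg, ← mul_assoc,
      hB, one_mul, neg_neg]
  have hsingle : nestedComm [b • B] (a • Z) = (2 * a * b) • (B * Z) := by
    rw [nestedComm_smul, ← List.replicate_one, nestedComm_replicate_smul hBZ, pow_one, pow_one,
      smul_smul]
    congr 1
    ring
  rw [nestedComm_append, nestedComm_append, hsingle, nestedComm_smul,
    nestedComm_replicate_smul (mul_anticomm_of_anticomm_of_commute hBZ' hZZ'),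
    pow_eq_one_of_mul_self_eq_one hZ' (Nat.even_add_one.mpr (Nat.not_even_iff_odd.mpr hm)),
    one_mul, nestedComm_smul, nestedComm_smul, nestedComm_replicate_smul hBBZ,
    pow_eq_self_of_mul_self_eq_one hB hm, ← mul_assoc, hB, one_mul, smul_smul, smul_smul]
  congr 1
  ring

end NestedComm

lemma card_mul_le_sum_ofFn_snoc {ι κ : Type*} [Fintype ι] [Fintype κ] {m : ℕ}
    (F : List ι → ι → ℝ) (hF : ∀ l b, 0 ≤ F l b) {b : κ → ι} (hb : Function.Injective b)
    {c : ℝ} (hc : ∀ a, ∃ l : List ι, l.length = m ∧ c ≤ F l (b a)) :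
    Fintype.card κ * c ≤
      ∑ f : Fin (m + 1) → ι, F (List.ofFn fun j : Fin m => f j.castSucc) (f (Fin.last m)) := by
  classical
  choose w hw hcw using hc
  let T (a : κ) : Fin (m + 1) → ι := Fin.snoc (fun j => (w a).get (j.cast (hw a).symm)) (b a)
  have hT (a : κ) :
      F (List.ofFn fun j : Fin m => T a j.castSucc) (T a (Fin.last m)) = F (w a) (b a) := by
    simp only [T, Fin.snoc_castSucc, Fin.snoc_last]
    rw [← List.ofFn_congr (hw a), List.ofFn_get]
  have hTinj : Function.Injective T := fun a a' h =>
    hb (by simpa [T] using congrFun h (Fin.last m))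
  calc (Fintype.card κ : ℝ) * c = ∑ _a : κ, c := by simp [mul_comm]
    _ ≤ ∑ a, F (w a) (b a) := Finset.sum_le_sum fun a _ => hcw a
    _ = ∑ f ∈ Finset.univ.map ⟨T, hTinj⟩,
          F (List.ofFn fun j : Fin m => f j.castSucc) (f (Fin.last m)) := by
      simp [Finset.sum_map, hT]
    _ ≤ _ := Finset.sum_le_univ_sum_of_nonneg fun f => hF _ _

section Pauli

variable {n : ℕ}

lemma update_add_one_involutive (i : Fin n) :
    Function.Involutive fun x : Fin n → Fin 2 => Function.update x i (x i + 1) := fun x => by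
  ext t
  rcases eq_or_ne t i with rfl | ht
  · simp only [Function.update_self]; omega
  · simp [Function.update_of_ne ht]

def flipBit (i : Fin n) : Equiv.Perm (Fin n → Fin 2) :=
  (update_add_one_involutive i).toPerm

lemma flipBit_apply (i : Fin n) (x : Fin n → Fin 2) :
    flipBit i x = Function.update x i (x i + 1) := rfl

@[simp]
lemma flipBit_flipBit (i : Fin n) (x : Fin n → Fin 2) : flipBit i (flipBit i x) = x :=
  update_add_one_involutive i x

lemma flipBit_commute (i j : Fin n) : Commute (flipBit i) (flipBit j) := by
  ext x t
  simp only [Equiv.Perm.mul_apply, flipBit_apply, Function.update_apply]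
  split_ifs <;> subst_vars <;> first | rfl | omega

lemma qubitX_eq_toMatrix (i : Fin n) : qubitX n i = (flipBit i).toPEquiv.toMatrix := by
  ext x y
  simp [qubitX, PEquiv.toMatrix_apply, eq_comm, flipBit_apply]

lemma qubitX_mul_self (i : Fin n) : qubitX n i * qubitX n i = 1 := by
  rw [qubitX_eq_toMatrix, ← PEquiv.toMatrix_trans, ← Equiv.toPEquiv_trans]
  ext x y
  simp [PEquiv.toMatrix_apply, one_apply]

lemma qubitZ_mul_self (i : Fin n) : qubitZ n i * qubitZ n i = 1 := by
  rw [qubitZ, diagonal_mul_diagonal, ← diagonal_one]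
  congr 1
  ext x
  split_ifs <;> simp

lemma qubitX_isHermitian (i : Fin n) : (qubitX n i).IsHermitian := by
  ext x y
  have hsymm : flipBit i y = x ↔ flipBit i x = y :=
    ⟨fun h => by rw [← h, flipBit_flipBit], fun h => by rw [← h, flipBit_flipBit]⟩
  simp [qubitX_eq_toMatrix, conjTranspose_apply, PEquiv.toMatrix_apply, hsymm]

lemma qubitZ_isHermitian (i : Fin n) : (qubitZ n i).IsHermitian := by
  refine isHermitian_diagonal_of_self_adjoint _ ?_
  ext x
  split_ifs <;> simp [*]

lemma qubitX_commute (i j : Fin n) : Commute (qubitX n i) (qubitX n j) := by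
  simp only [qubitX_eq_toMatrix, Commute, SemiconjBy, ← PEquiv.toMatrix_trans,
    ← Equiv.toPEquiv_trans, ← Equiv.Perm.mul_def, (flipBit_commute i j).eq]

lemma qubitZ_commute (i j : Fin n) : Commute (qubitZ n i) (qubitZ n j) := by
  simp only [qubitZ, Commute, SemiconjBy, diagonal_mul_diagonal, mul_comm]

lemma qubitX_mul_qubitZ_self (i : Fin n) :
    qubitX n i * qubitZ n i = -(qubitZ n i * qubitX n i) := by
  have hsign : ((fun x : Fin n → Fin 2 => if x i = 0 then (1 : ℂ) else -1) ∘ flipBit i) =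
      fun x => -if x i = 0 then 1 else -1 := by
    ext x
    simp only [Function.comp_apply, flipBit_apply, Function.update_self]
    rcases Fin.exists_fin_two.mp ⟨x i, rfl⟩ with h | h <;> simp [h]
  rw [qubitX_eq_toMatrix, qubitZ, toMatrix_toPEquiv_mul_diagonal, hsign, ← diagonal_neg, neg_mul]

lemma qubitX_commute_qubitZ {i j : Fin n} (hij : i ≠ j) :
    Commute (qubitX n i) (qubitZ n j) := by
  have hsign : ((fun x : Fin n → Fin 2 => if x j = 0 then (1 : ℂ) else -1) ∘ flipBit i) =
      fun x => if x j = 0 then 1 else -1 := by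
    ext x
    simp [flipBit_apply, Function.update_of_ne hij.symm]
  rw [Commute, SemiconjBy, qubitX_eq_toMatrix, qubitZ, toMatrix_toPEquiv_mul_diagonal, hsign]

lemma qubitXX_mul_self (i j : Fin n) :
    qubitX n i * qubitX n j * (qubitX n i * qubitX n j) = 1 := by
  rw [(qubitX_commute i j).symm.mul_mul_mul_comm, qubitX_mul_self, qubitX_mul_self, one_mul]

lemma qubitXX_mul_qubitZ_left {i j : Fin n} (hij : i ≠ j) :
    qubitX n i * qubitX n j * qubitZ n i = -(qubitZ n i * (qubitX n i * qubitX n j)) := by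
  rw [mul_assoc, (qubitX_commute_qubitZ hij.symm).eq, ← mul_assoc, qubitX_mul_qubitZ_self,
    neg_mul, mul_assoc]

lemma qubitXX_mul_qubitZ_right {i j : Fin n} (hij : i ≠ j) :
    qubitX n i * qubitX n j * qubitZ n j = -(qubitZ n j * (qubitX n i * qubitX n j)) := by
  rw [mul_assoc, qubitX_mul_qubitZ_self, mul_neg, ← mul_assoc, (qubitX_commute_qubitZ hij).eq,
    mul_assoc]

end Pauli

lemma nextSite_ne_self {n : ℕ} (hn : 2 ≤ n) (i : Fin n) : nextSite i ≠ i := by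
  intro h
  have hval : (i.val + 1) % n = i.val := congrArg Fin.val h
  rcases Nat.lt_or_ge (i.val + 1) n with hlt | hge
  · rw [Nat.mod_eq_of_lt hlt] at hval
    omega
  · rw [show i.val + 1 = n by omega, Nat.mod_self] at hval
    omega

lemma exists_word_le_specNorm_nestedComm {n : ℕ} (hn : 2 ≤ n) (h J g α : ℝ) {k : ℕ}
    (hk : 1 ≤ k) (i : Fin n) :
    ∃ l : List (SIdx n), l.length = 2 * k ∧ 2 ^ (2 * k) * (h ^ (k + 1) * J ^ k) ≤
      specNorm (nestedComm (l.map (SOp n h J g α)) (SOp n h J g α (Sum.inl i))) := by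
  have hij : i ≠ nextSite i := (nextSite_ne_self hn i).symm
  have hX (t : Fin n) : qubitX n t ∈ unitary _ :=
    mem_unitary_of_isHermitian (qubitX_isHermitian t) (qubitX_mul_self t)
  have hZ (t : Fin n) : qubitZ n t ∈ unitary _ :=
    mem_unitary_of_isHermitian (qubitZ_isHermitian t) (qubitZ_mul_self t)
  have hB := qubitXX_mul_self (n := n) i (nextSite i)
  have hBZ := qubitXX_mul_qubitZ_left hij
  have hBZ' := qubitXX_mul_qubitZ_right hij
  rcases Nat.even_or_odd k with hk_even | hk_odd
  · obtain ⟨m, rfl⟩ : ∃ m, k = m + 1 := ⟨k - 1, by omega⟩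
    have hm : Odd m := Nat.not_even_iff_odd.mp (Nat.even_add_one.mp hk_even)
    refine ⟨List.replicate m (Sum.inr (Sum.inl i)) ++
      List.replicate (m + 1) (Sum.inl (nextSite i)) ++ [Sum.inr (Sum.inl i)], by simp; omega, ?_⟩
    simp only [List.map_append, List.map_replicate, List.map_cons, List.map_nil, SOp]
    rw [nestedComm_replicate_append_replicate_append_singleton hB (qubitZ_mul_self _) hBZ hBZ'
      (qubitZ_commute _ _) hm, specNorm_smul_of_mem_unitary (hZ i)]
    exact_mod_cast (le_abs_self _).trans_eq (Complex.norm_real _).symm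
  · refine ⟨List.replicate k (Sum.inl (nextSite i)) ++ List.replicate k (Sum.inr (Sum.inl i)),
      by simp; omega, ?_⟩
    simp only [List.map_append, List.map_replicate, SOp]
    rw [nestedComm_replicate_append_replicate hB (qubitZ_mul_self _) hBZ hBZ'
      (qubitZ_commute _ _) hk_odd, specNorm_smul_of_mem_unitary
        (mul_mem (hZ _) (mul_mem (mul_mem (hX _) (hX _)) (hZ _)))]
    exact_mod_cast (le_abs_self _).trans_eq (Complex.norm_real _).symm

lemma alphaComm_eq_sum_ofFn (n : ℕ) (h J g α : ℝ) (k : ℕ) :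
    alphaComm n h J g α k = ∑ f : Fin (2 * k + 1) → SIdx n,
      specNorm (nestedComm ((List.ofFn fun j : Fin (2 * k) => f j.castSucc).map (SOp n h J g α))
        (SOp n h J g α (f (Fin.last (2 * k))))) := by
  simp only [alphaComm, List.ofFn_eq_map, List.map_map, Function.comp_def]

theorem stmt16_general (h J g α : ℝ) (k : ℕ) (hk : 1 ≤ k) (n : ℕ) (hn : 3 ≤ n) :
    2 ^ (2 * k) * min (h ^ (k + 1) * J ^ k) (h ^ k * J ^ (k + 1)) * (n : ℝ)
      ≤ alphaComm n h J g α k := by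
  have hsum := card_mul_le_sum_ofFn_snoc
    (fun l b => specNorm (nestedComm (l.map (SOp n h J g α)) (SOp n h J g α b)))
    (fun _ _ => norm_nonneg _) Sum.inl_injective
    (exists_word_le_specNorm_nestedComm (by omega) h J g α hk)
  rw [Fintype.card_fin] at hsum
  rw [alphaComm_eq_sum_ofFn]
  calc 2 ^ (2 * k) * min (h ^ (k + 1) * J ^ k) (h ^ k * J ^ (k + 1)) * (n : ℝ)
      ≤ n * (2 ^ (2 * k) * (h ^ (k + 1) * J ^ k)) := by
        rw [mul_comm]
        gcongr
        exact min_le_left _ _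
    _ ≤ _ := hsum

/-- for every integer `n ≥ 3`,
`α_comm^{(2k+1)} ≥ 2^{2k}·min{h^{k+1}·J^k, h^k·J^{k+1}}·n`. -/
theorem stmt16 (h J g α : ℝ) (hh : 0 < h) (hJ : 0 < J) (hg : 0 ≤ g) (hα : 1 < α)
    (k : ℕ) (hk : 1 ≤ k) (n : ℕ) (hn : 3 ≤ n) :
    2 ^ (2 * k) * min (h ^ (k + 1) * J ^ k) (h ^ k * J ^ (k + 1)) * (n : ℝ)
      ≤ alphaComm n h J g α k :=
  stmt16_general h J g α k hk n hn
end
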